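/- Let {P_{j,m}(ε,t,A)} be a secular-coefficient family, and assume m_1 = ⋯ = m_n = 0 and that each V_j is autonomous, i.e. V_j ∈ ℂ[ε, y_1,…,y_n]. Then P_{j,m} = 0 for every m ≠ 0 and every j, and the resonant coefficients satisfy ∂_t P_{j,0}(ε,t,A) = ε V_j(ε, P_{1,0}(ε,t,A), …, P_{n,0}(ε,t,A)) in ℂ[t,A][[ε]]; i.e. the renormalized amplitudes 𝒜_j = P_{j,0} themselves satisfy the original autonomous system d𝒜_j/dt = ε V_j(ε, 𝒜). -/

import Mathlib

noncomputable section

open Polynomial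

/-- Finite `R`-linear combinations of Fourier modes `e^{i m t}` (`m : ℤ`):
the mode-`m` coefficient of `x` is `x m : R`. -/
abbrev ModeRing (R : Type) [CommRing R] : Type := AddMonoidAlgebra R ℤ

/-- Formal power series in `ε` whose coefficients are finite Fourier sums with
coefficients in `R`. -/
abbrev EpsSeries (R : Type) [CommRing R] : Type := PowerSeries (ModeRing R)

/-- The mode `e^{i t}`, as a unit of `EpsSeries R` (inverse `e^{-i t}`). -/
def zUnit (R : Type) [CommRing R] : (EpsSeries R)ˣ where
  val := PowerSeries.C (AddMonoidAlgebra.single 1 1)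
  inv := PowerSeries.C (AddMonoidAlgebra.single (-1) 1)
  val_inv := by
    rw [← map_mul, AddMonoidAlgebra.single_mul_single]
    norm_num [AddMonoidAlgebra.one_def]
  inv_val := by
    rw [← map_mul, AddMonoidAlgebra.single_mul_single]
    norm_num [AddMonoidAlgebra.one_def]

/-- Evaluation of a Laurent polynomial in `z` (an element of `ℂ[z,z⁻¹] = AddMonoidAlgebra ℂ ℤ`)
at `z = e^{i t}`, landing in `EpsSeries R`. -/
def zEval (R : Type) [CommRing R] [Algebra ℂ R] : AddMonoidAlgebra ℂ ℤ →+* EpsSeries R :=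
  AddMonoidAlgebra.liftNCRingHom
    (PowerSeries.C.comp (AddMonoidAlgebra.singleZeroRingHom.comp (algebraMap ℂ R)))
    ((Units.coeHom _).comp (zpowersHom _ (zUnit R)))
    (fun _ _ => Commute.all _ _)

/-- Evaluation of `V ∈ ℂ[ε, z, z⁻¹, y₁, …, yₙ]` (encoded as a polynomial in the `y`-variables
with coefficients in `ℂ[z,z⁻¹][ε]`) at `z = e^{i t}`, `ε = ε` (the power series variable)
and given formal series values of the `y`-variables. -/
def VEval {n : ℕ} (R : Type) [CommRing R] [Algebra ℂ R]
    (V : MvPolynomial (Fin n) (Polynomial (AddMonoidAlgebra ℂ ℤ)))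
    (y : Fin n → EpsSeries R) : EpsSeries R :=
  MvPolynomial.eval₂ (Polynomial.eval₂RingHom (zEval R) PowerSeries.X) y V

/-- The polynomial ring `ℂ[t, A₁, …, Aₙ]`: the variable `none` is `t`, `some i` is `Aᵢ`. -/
abbrev AmpRing (n : ℕ) : Type := MvPolynomial (Option (Fin n)) ℂ

/-- The secular coefficient `P_{j,m}(ε,t,A) ∈ ℂ[t,A][[ε]]` of a family
`Q j = Σ_k ε^k Σ_m P_{j,m}^{(k)} e^{imt}`. -/
def Pc {n : ℕ} (Q : Fin n → EpsSeries (AmpRing n)) (j : Fin n) (m : ℤ) :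
    PowerSeries (AmpRing n) :=
  PowerSeries.mk fun k => (PowerSeries.coeff (R := ModeRing (AmpRing n)) k (Q j)).coeff m

/-- A secular-coefficient family for the system `dy_j/dt = i m_j y_j + ε V_j(ε,e^{±it},y)`:
(a) at each `ε`-order only finitely many modes are nonzero (built into `ModeRing`);
(b) the `ε⁰`-coefficient of `P_{j,m}` is `A_j δ_{m,m_j}`;
(c) for `k ≥ 1` the `ε^k`-coefficient of the resonant `P_{j,m_j}` vanishes at `t = 0`;
(d) the differential equation holds order by order in `ε` and mode by mode in `e^{imt}`:
`∂_t P_{j,m} + i(m-m_j) P_{j,m} = [ε V_j(ε, e^{±it}, Σ_l P_{·,l} e^{ilt})]_{e^{imt}}`. -/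
structure IsSecularFamily {n : ℕ} (mvec : Fin n → ℤ)
    (V : Fin n → MvPolynomial (Fin n) (Polynomial (AddMonoidAlgebra ℂ ℤ)))
    (Q : Fin n → EpsSeries (AmpRing n)) : Prop where
  coeff_zero : ∀ j, PowerSeries.coeff (R := ModeRing (AmpRing n)) 0 (Q j)
      = AddMonoidAlgebra.single (mvec j) (MvPolynomial.X (some j))
  resonant_vanish : ∀ (j : Fin n) (k : ℕ), 1 ≤ k →
    MvPolynomial.aeval
      (fun v : Option (Fin n) => Option.elim v (0 : AmpRing n) (fun i => MvPolynomial.X (some i)))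
      ((PowerSeries.coeff (R := ModeRing (AmpRing n)) k (Q j)).coeff (mvec j)) = 0
  ode : ∀ (j : Fin n) (m : ℤ),
    (PowerSeries.mk fun k =>
        MvPolynomial.pderiv none ((PowerSeries.coeff (R := ModeRing (AmpRing n)) k (Q j)).coeff m))
      + PowerSeries.C (MvPolynomial.C (Complex.I * ((m : ℂ) - (mvec j : ℂ)))) * Pc Q j m
      = PowerSeries.mk fun k =>
          (PowerSeries.coeff (R := ModeRing (AmpRing n)) k
            (PowerSeries.X * VEval (AmpRing n) (V j) Q)).coeff m

/-- The polynomial ring `ℂ[t, s, A₁, …, Aₙ]`: `none` is `t`, `some none` is `s`,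
`some (some i)` is `Aᵢ`. -/
abbrev AmpRing2 (n : ℕ) : Type := MvPolynomial (Option (Option (Fin n))) ℂ

/-- The inclusion `ℂ[t,A] → ℂ[t,s,A]`. -/
def embedTA {n : ℕ} : AmpRing n →+* AmpRing2 n :=
  (MvPolynomial.rename (Option.map (some : Fin n → Option (Fin n)))).toRingHom

/-- The map `ℂ[t,A] → ℂ[t,s,A]` renaming `t` to `s`. -/
def renameTS {n : ℕ} : AmpRing n →+* AmpRing2 n :=
  (MvPolynomial.rename
    (fun v : Option (Fin n) => Option.elim v (some none) (fun i => some (some i)))).toRingHom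

/-- Substitution of power series (with nontrivial `ε⁰`-part) for the coefficient variables of a
power series: `(substSeries φ p) = Σ_k ε^k · φ(coeff_k p)`; at each `ε`-order this is a finite
sum. -/
def substSeries {R R' : Type} [CommRing R] [CommRing R'] (φ : R →+* PowerSeries R')
    (p : PowerSeries R) : PowerSeries R' :=
  PowerSeries.mk fun K => ∑ k ∈ Finset.range (K + 1),
    PowerSeries.coeff (R := R') (K - k) (φ (PowerSeries.coeff (R := R) k p))

/-- The renormalized amplitude `𝒜_i(ε,s,A) = P_{i,m_i}(ε,s,A)`, as an element of
`ℂ[t,s,A][[ε]]` (the `t`-variable of `P` renamed to `s`). -/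
def renAmpS {n : ℕ} (mvec : Fin n → ℤ) (Q : Fin n → EpsSeries (AmpRing n)) (i : Fin n) :
    PowerSeries (AmpRing2 n) :=
  PowerSeries.map renameTS (Pc Q i (mvec i))

/-- The substitution `t ↦ t - s`, `A_i ↦ 𝒜_i(ε,s,A)`, as a ring map
`ℂ[t,A] → ℂ[t,s,A][[ε]]`. -/
def substTA {n : ℕ} (mvec : Fin n → ℤ) (Q : Fin n → EpsSeries (AmpRing n)) :
    AmpRing n →+* PowerSeries (AmpRing2 n) :=
  MvPolynomial.eval₂Hom ((PowerSeries.C (R := AmpRing2 n)).comp MvPolynomial.C)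
    (fun v : Option (Fin n) => Option.elim v
      (PowerSeries.C (MvPolynomial.X none - MvPolynomial.X (some none)))
      (fun i => renAmpS mvec Q i))

/-- Coefficientwise `∂_t` on `ℂ[t,A][[ε]]`. -/
def dT {n : ℕ} (p : PowerSeries (AmpRing n)) : PowerSeries (AmpRing n) :=
  PowerSeries.mk fun k => MvPolynomial.pderiv none (PowerSeries.coeff (R := AmpRing n) k p)

/-- Evaluation of `W ∈ ℂ[ε, y₁, …, yₙ]` at `ε = ε` (the power series variable) and given
power series values of the `y`-variables, in `ℂ[t,A][[ε]]`. -/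
def WEval {n : ℕ} (W : MvPolynomial (Fin n) (Polynomial ℂ))
    (y : Fin n → PowerSeries (AmpRing n)) : PowerSeries (AmpRing n) :=
  MvPolynomial.eval₂
    (Polynomial.eval₂RingHom ((PowerSeries.C (R := AmpRing n)).comp (MvPolynomial.C : ℂ →+* AmpRing n))
      PowerSeries.X) y W

/-!
With all `m_j = 0`, the `ε^{k+1}`-coefficient `P` of the mode-`m` part of `y_j` satisfies
`∂_t P + i m P = [V_j(ε, y)]_{ε^k, e^{imt}}`. Induct on `k`: if the `ε`-orders `≤ k` of every
`y_i` carry only mode `0`, then `y` is congruent modulo `ε^{k+1}` to its mode-`0` part, and an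
autonomous `V_j` maps mode-`0` series to mode-`0` series, so the right side vanishes for `m ≠ 0`.
Then `∂_t P = -i m P`, impossible for `P ≠ 0` since `∂_t` lowers the degree in `t`. Once every
`y_i` is its mode-`0` part, `V_j(ε, y) = W_j(ε, P_{·,0})` and the mode-`0` equation is the claim.
-/

section ModeZero

variable {R : Type} [CommRing R]

def modeSeries (m : ℤ) (p : EpsSeries R) : PowerSeries R :=
  PowerSeries.mk fun k => (PowerSeries.coeff k p).coeff m

theorem AddMonoidAlgebra.eq_single_zero_iff (x : ModeRing R) :
    x = AddMonoidAlgebra.single 0 (x.coeff 0) ↔ ∀ m ≠ 0, x.coeff m = 0 := by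
  constructor
  · intro hx m hm
    rw [hx, AddMonoidAlgebra.coeff_single, Finsupp.single_eq_of_ne hm]
  · intro h
    ext m
    rw [AddMonoidAlgebra.coeff_single]
    rcases eq_or_ne m 0 with rfl | hm
    · rw [Finsupp.single_eq_same]
    · rw [Finsupp.single_eq_of_ne hm, h m hm]

theorem modeSeries_zero_map_singleZero (p : PowerSeries R) :
    modeSeries 0 (PowerSeries.map AddMonoidAlgebra.singleZeroRingHom p) = p := by
  ext k
  simp [modeSeries]

theorem coeff_sub_map_modeSeries_zero (p : EpsSeries R) (k : ℕ) :
    PowerSeries.coeff k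
        (p - PowerSeries.map AddMonoidAlgebra.singleZeroRingHom (modeSeries 0 p)) = 0 ↔
      ∀ m ≠ 0, (PowerSeries.coeff k p).coeff m = 0 := by
  rw [map_sub, PowerSeries.coeff_map, sub_eq_zero, ← AddMonoidAlgebra.eq_single_zero_iff]
  simp [modeSeries]

theorem eq_map_modeSeries_zero_of {p : EpsSeries R}
    (h : ∀ k, ∀ m ≠ 0, (PowerSeries.coeff k p).coeff m = 0) :
    p = PowerSeries.map AddMonoidAlgebra.singleZeroRingHom (modeSeries 0 p) := by
  rw [← sub_eq_zero]
  refine PowerSeries.ext fun k => ?_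
  rw [map_zero]
  exact (coeff_sub_map_modeSeries_zero p k).2 (h k)

end ModeZero

theorem Polynomial.eq_zero_of_derivative_add_C_mul_eq_zero {S : Type*} [CommRing S]
    [NoZeroDivisors S] {c : S} (hc : c ≠ 0) {q : S[X]} (h : derivative q + C c * q = 0) :
    q = 0 := by
  have hlead : c * q.leadingCoeff = 0 := by
    simpa [coeff_derivative, coeff_natDegree_succ_eq_zero] using
      congrArg (coeff · q.natDegree) h
  exact leadingCoeff_eq_zero.1 ((mul_eq_zero.1 hlead).resolve_left hc)

theorem MvPolynomial.optionEquivLeft_pderiv_none {K σ : Type*} [CommRing K]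
    (P : MvPolynomial (Option σ) K) :
    optionEquivLeft K σ (pderiv none P) = derivative (optionEquivLeft K σ P) := by
  induction P using MvPolynomial.induction_on with
  | C a => simp [optionEquivLeft_C]
  | add p q hp hq => rw [map_add, map_add, hp, hq, map_add, derivative_add]
  | mul_X p v hp =>
    cases v with
    | none =>
      simp only [map_mul, map_add, pderiv_mul, pderiv_X_self, mul_one, hp,
        optionEquivLeft_X_none, derivative_mul, derivative_X]
    | some i =>
      simp only [map_mul, pderiv_mul, pderiv_X_of_ne (Option.some_ne_none i), mul_zero,
        add_zero, hp, optionEquivLeft_X_some, derivative_mul, derivative_C]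

theorem MvPolynomial.eq_zero_of_pderiv_none_add_C_mul_eq_zero {K σ : Type*} [CommRing K]
    [IsDomain K] {c : K} (hc : c ≠ 0) {P : MvPolynomial (Option σ) K}
    (h : pderiv none P + C c * P = 0) : P = 0 := by
  have h' := congrArg (optionEquivLeft K σ) h
  rw [map_add, map_mul, optionEquivLeft_pderiv_none, optionEquivLeft_C, map_zero] at h'
  have hc' : (C c : MvPolynomial σ K) ≠ 0 := by simpa using hc
  simpa using Polynomial.eq_zero_of_derivative_add_C_mul_eq_zero hc' h'

theorem MvPolynomial.eval₂_sub_eval₂_mem {σ S T : Type*} [CommRing S] [CommRing T]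
    (f : S →+* T) (I : Ideal T) {y y' : σ → T} (h : ∀ i, y i - y' i ∈ I)
    (P : MvPolynomial σ S) : eval₂ f y P - eval₂ f y' P ∈ I := by
  rw [← Ideal.Quotient.eq, eval₂_comp_left, eval₂_comp_left]
  congr 1
  funext i
  exact Ideal.Quotient.eq.2 (h i)

theorem zEval_single_zero (R : Type) [CommRing R] [Algebra ℂ R] (c : ℂ) :
    zEval R (AddMonoidAlgebra.single 0 c)
      = PowerSeries.C (AddMonoidAlgebra.single 0 (algebraMap ℂ R c)) := by
  change AddMonoidAlgebra.liftNC _ _ (AddMonoidAlgebra.single 0 c) = _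
  rw [AddMonoidAlgebra.liftNC_single]
  simp

theorem VEval_map_singleZero {n : ℕ} (R : Type) [CommRing R] [Algebra ℂ R]
    (W : MvPolynomial (Fin n) ℂ[X]) (y : Fin n → PowerSeries R) :
    VEval R (MvPolynomial.map (mapRingHom AddMonoidAlgebra.singleZeroRingHom) W)
        (fun i => PowerSeries.map AddMonoidAlgebra.singleZeroRingHom (y i))
      = PowerSeries.map AddMonoidAlgebra.singleZeroRingHom
          (MvPolynomial.eval₂ (eval₂RingHom (PowerSeries.C.comp (algebraMap ℂ R)) PowerSeries.X)
            y W) := by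
  rw [VEval, MvPolynomial.eval₂_comp_left, MvPolynomial.eval₂_map]
  congr 1
  refine Polynomial.ringHom_ext (fun a => ?_) ?_
  · simp only [RingHom.comp_apply, coe_mapRingHom, coe_eval₂RingHom, map_C, eval₂_C,
      PowerSeries.map_C]
    exact zEval_single_zero R a
  · simp

namespace IsSecularFamily

variable {n : ℕ} {mvec : Fin n → ℤ}
  {V : Fin n → MvPolynomial (Fin n) (Polynomial (AddMonoidAlgebra ℂ ℤ))}
  {Q : Fin n → EpsSeries (AmpRing n)}

theorem pderiv_add_C_mul_coeff_succ (hQ : IsSecularFamily mvec V Q) (j : Fin n) (m : ℤ)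
    (k : ℕ) :
    MvPolynomial.pderiv none ((PowerSeries.coeff (k + 1) (Q j)).coeff m)
        + MvPolynomial.C (Complex.I * ((m : ℂ) - mvec j))
          * (PowerSeries.coeff (k + 1) (Q j)).coeff m
      = (PowerSeries.coeff k (VEval (AmpRing n) (V j) Q)).coeff m := by
  simpa only [map_add, PowerSeries.coeff_mk, PowerSeries.coeff_C_mul, Pc,
    PowerSeries.coeff_succ_X_mul] using congrArg (PowerSeries.coeff (k + 1)) (hQ.ode j m)

theorem coeff_coeff_eq_zero_of_autonomous (hQ : IsSecularFamily mvec V Q)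
    (hm : ∀ j, mvec j = 0) {W : Fin n → MvPolynomial (Fin n) ℂ[X]}
    (hV : ∀ j, V j = MvPolynomial.map (mapRingHom AddMonoidAlgebra.singleZeroRingHom) (W j))
    (k : ℕ) (j : Fin n) {m : ℤ} (hm0 : m ≠ 0) : (PowerSeries.coeff k (Q j)).coeff m = 0 := by
  induction k using Nat.strong_induction_on generalizing j m with
  | _ k IH =>
  rcases k with _ | k
  · rw [hQ.coeff_zero j, hm j, AddMonoidAlgebra.coeff_single, Finsupp.single_eq_of_ne hm0]
  have hclose : ∀ i, Q i - PowerSeries.map AddMonoidAlgebra.singleZeroRingHom (modeSeries 0 (Q i))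
      ∈ Ideal.span {PowerSeries.X ^ (k + 1)} := fun i => by
    rw [Ideal.mem_span_singleton, PowerSeries.X_pow_dvd_iff]
    exact fun l hl => (coeff_sub_map_modeSeries_zero (Q i) l).2 fun m' hm' => IH l hl i hm'
  have hVQ := MvPolynomial.eval₂_sub_eval₂_mem
    (eval₂RingHom (zEval (AmpRing n)) PowerSeries.X) _ hclose (V j)
  rw [← VEval, ← VEval, hV j, VEval_map_singleZero, Ideal.mem_span_singleton,
    PowerSeries.X_pow_dvd_iff] at hVQ
  have hVQk := hVQ k k.lt_succ_self
  rw [map_sub, sub_eq_zero] at hVQk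
  have hrhs : (PowerSeries.coeff k (VEval (AmpRing n) (V j) Q)).coeff m = 0 := by
    rw [hV j, hVQk, PowerSeries.coeff_map]
    exact Finsupp.single_eq_of_ne hm0
  refine MvPolynomial.eq_zero_of_pderiv_none_add_C_mul_eq_zero ?_
    ((hQ.pderiv_add_C_mul_coeff_succ j m k).trans hrhs)
  simpa [hm j] using hm0

end IsSecularFamily

theorem autonomous_zero_modes_general {n : ℕ} (mvec : Fin n → ℤ)
    (hm : ∀ j, mvec j = 0)
    (V : Fin n → MvPolynomial (Fin n) (Polynomial (AddMonoidAlgebra ℂ ℤ)))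
    (W : Fin n → MvPolynomial (Fin n) (Polynomial ℂ))
    (hV : ∀ j, V j = MvPolynomial.map (Polynomial.mapRingHom AddMonoidAlgebra.singleZeroRingHom) (W j))
    (Q : Fin n → EpsSeries (AmpRing n))
    (hQ : IsSecularFamily mvec V Q) :
    (∀ (j : Fin n) (m : ℤ), m ≠ 0 → Pc Q j m = 0)
    ∧ (∀ j : Fin n,
        dT (Pc Q j 0) = PowerSeries.X * WEval (W j) (fun i => Pc Q i 0)) := by
  have hmode := hQ.coeff_coeff_eq_zero_of_autonomous hm hV
  have hQ₀ : ∀ j, Q j = PowerSeries.map AddMonoidAlgebra.singleZeroRingHom (Pc Q j 0) :=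
    fun j => eq_map_modeSeries_zero_of fun k _ hm0 => hmode k j hm0
  have hVQ : ∀ j, VEval (AmpRing n) (V j) Q
      = PowerSeries.map AddMonoidAlgebra.singleZeroRingHom (WEval (W j) fun i => Pc Q i 0) := by
    intro j
    have h := VEval_map_singleZero (AmpRing n) (W j) (fun i => Pc Q i 0)
    rwa [← funext hQ₀, ← hV j] at h
  refine ⟨fun j m hm0 => PowerSeries.ext fun k => by simpa [Pc] using hmode k j hm0,
    fun j => ?_⟩
  calc dT (Pc Q j 0) = modeSeries 0 (PowerSeries.X * VEval (AmpRing n) (V j) Q) := by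
        simpa [hm j, dT, Pc, modeSeries] using hQ.ode j 0
    _ = PowerSeries.X * WEval (W j) (fun i => Pc Q i 0) := by
        rw [hVQ j, ← PowerSeries.map_X AddMonoidAlgebra.singleZeroRingHom, ← map_mul,
          modeSeries_zero_map_singleZero]

/-- autonomous case with vanishing linear part: if `m₁ = ⋯ = mₙ = 0` and
each `V_j` is autonomous, i.e. `V_j = W_j ∈ ℂ[ε, y₁, …, yₙ]`, then `P_{j,m} = 0` for all
`m ≠ 0`, and the renormalized amplitudes `𝒜_j = P_{j,0}` satisfy the original system
`∂_t P_{j,0}(ε,t,A) = ε W_j(ε, P_{1,0}, …, P_{n,0})` in `ℂ[t,A][[ε]]`. -/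
theorem autonomous_zero_modes {n : ℕ} (hn : 0 < n) (mvec : Fin n → ℤ)
    (hm : ∀ j, mvec j = 0)
    (V : Fin n → MvPolynomial (Fin n) (Polynomial (AddMonoidAlgebra ℂ ℤ)))
    (W : Fin n → MvPolynomial (Fin n) (Polynomial ℂ))
    (hV : ∀ j, V j = MvPolynomial.map (Polynomial.mapRingHom AddMonoidAlgebra.singleZeroRingHom) (W j))
    (Q : Fin n → EpsSeries (AmpRing n))
    (hQ : IsSecularFamily mvec V Q) :
    (∀ (j : Fin n) (m : ℤ), m ≠ 0 → Pc Q j m = 0)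
    ∧ (∀ j : Fin n,
        dT (Pc Q j 0) = PowerSeries.X * WEval (W j) (fun i => Pc Q i 0)) :=
  autonomous_zero_modes_general mvec hm V W hV Q hQ

end
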